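/- arXiv:2003.09505 — 2 statements merged into one kernel-verified Lean document; each statement's English description precedes it below -/
import Mathlib

section
/- Let n ≥ 1, let p : {1,…,n} → [0,1] be a probability profile with a sorting permutation σ, and let D > 0. Assume (A1) p_{σ(1)} > p_{σ(2)} > … > p_{σ(n)} > 0, and (A2) there exists k with 1 ≤ k ≤ n such that ∑_{i=1}^{k} p_{σ(i)} > D − 1/2 and ∑_{i=1}^{k−1} p_{σ(i)} < D − 1/2. Define δ₁ = ∑_{i=1}^{k} p_{σ(i)} − (D − 1/2), δ₂ = (D − 1/2) − ∑_{i=1}^{k−1} p_{σ(i)}, Δ_k = p_{σ(k)} − p_{σ(k+1)} if k < n and Δ_n = 2, and ε₀ = min(δ₁/k, δ₂/k, Δ_k/2). Then ε₀ > 0, and for every probability profile p̃ : {1,…,n} → [0,1] with |p̃_i − p_i| < ε₀ for all i: (i) p̃_{σ(i)} > p̃_{σ(j)} whenever 1 ≤ i ≤ k < j ≤ n; (ii) ∑_{i=1}^{k} p̃_{σ(i)} > D − 1/2 and ∑_{i=1}^{k−1} p̃_{σ(i)} < D − 1/2; consequently the set {σ(1),…,σ(k)} consists of the k largest entries of p̃,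 it is the output of the offline optimization algorithm applied to (p̃, D), and it is optimal for the true profile p. -/
open Finset

/-- Expected loss `f_{p,D}(S) = (∑_{i∈S} p_i − D)² + ∑_{i∈S} p_i(1 − p_i)`. -/
noncomputable def expLoss {n : ℕ} (p : Fin n → ℝ) (D : ℝ) (S : Finset (Fin n)) : ℝ :=
  (∑ i ∈ S, p i - D) ^ 2 + ∑ i ∈ S, p i * (1 - p i)

/-- The set `{σ(1),…,σ(k)}` (1-based), i.e. the image under `σ` of the first `k` indices. -/
def prefixSet {n : ℕ} (σ : Equiv.Perm (Fin n)) (k : ℕ) : Finset (Fin n) :=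
  (Finset.univ.filter fun i : Fin n => (i : ℕ) < k).image σ

/-! With `c = D - 1/2` one has `f(S ∪ {i}) = f(S) + 2 pᵢ (∑_S p - c)` for `i ∉ S`. Starting from any
`S`, one can therefore move towards the top-`k` set `T` without increasing `f`: drop an element
outside `T` while the sum stays at least `c`, otherwise trade it for a missing element of `T` (whose
`p` is larger), or add a missing element of `T` while the sum is at most `c`. Hence `T` is optimal.

The bound `ε₀` is small enough that the gap between the `k`-th and `(k+1)`-th entries and the
margins `δ₁`, `δ₂` (each absorbing at most `k` errors below `ε₀`) survive the perturbation; so `T`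
remains the top-`k` set of `p̃` and is still the first sorted prefix whose sum exceeds `c`. -/

section PrefixSet

variable {n : ℕ}

theorem mem_prefixSet {σ : Equiv.Perm (Fin n)} {m : ℕ} {x : Fin n} :
    x ∈ prefixSet σ m ↔ (σ.symm x : ℕ) < m := by
  simp only [prefixSet, mem_image, mem_filter, mem_univ, true_and]
  exact ⟨by rintro ⟨i, hi, rfl⟩; simpa using hi, fun h => ⟨σ.symm x, h, σ.apply_symm_apply x⟩⟩

variable (σ : Equiv.Perm (Fin n))

theorem card_prefixSet {m : ℕ} (hm : m ≤ n) : #(prefixSet σ m) = m := by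
  rw [prefixSet, card_image_of_injective _ σ.injective, Fin.card_filter_val_lt, min_eq_right hm]

theorem prefixSet_mono {m m' : ℕ} (h : m ≤ m') : prefixSet σ m ⊆ prefixSet σ m' := by
  intro x hx
  rw [mem_prefixSet] at *
  omega

theorem prefixSet_erase_last {k : ℕ} (hk : 0 < k) (hkn : k ≤ n) :
    (prefixSet σ k).erase (σ ⟨k - 1, by omega⟩) = prefixSet σ (k - 1) := by
  ext x
  simp only [mem_erase, mem_prefixSet, Ne, ← σ.symm_apply_eq, Fin.ext_iff]
  omega

theorem apply_le_apply_of_mem_prefixSet {f : Fin n → ℝ}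
    (hσ : ∀ i j : Fin n, i ≤ j → f (σ j) ≤ f (σ i)) {m : ℕ} {x y : Fin n}
    (hx : x ∈ prefixSet σ m) (hy : y ∉ prefixSet σ m) : f y ≤ f x := by
  rw [mem_prefixSet] at hx hy
  simpa using hσ (σ.symm x) (σ.symm y) (Fin.le_def.mpr (by omega))

theorem sum_erase_prefixSet_le {f : Fin n → ℝ} (hσ : ∀ i j : Fin n, i ≤ j → f (σ j) ≤ f (σ i))
    {k : ℕ} (hk : 0 < k) (hkn : k ≤ n) {y : Fin n} (hy : y ∈ prefixSet σ k) :
    ∑ i ∈ (prefixSet σ k).erase y, f i ≤ ∑ i ∈ prefixSet σ (k - 1), f i := by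
  have hlast : σ ⟨k - 1, by omega⟩ ∈ prefixSet σ k := mem_prefixSet.mpr (by simp; omega)
  rw [← prefixSet_erase_last σ hk hkn, sum_erase_eq_sub hy, sum_erase_eq_sub hlast]
  rw [mem_prefixSet] at hy
  have := hσ (σ.symm y) ⟨k - 1, by omega⟩ (Fin.le_def.mpr (by simp; omega))
  rw [σ.apply_symm_apply] at this
  linarith

end PrefixSet

section SdiffCard

variable {α : Type*} [DecidableEq α] {s t : Finset α} {a : α}

theorem card_sdiff_add_card_sdiff_erase (ha : a ∈ s) (hat : a ∉ t) :
    #(s.erase a \ t) + #(t \ s.erase a) + 1 = #(s \ t) + #(t \ s) := by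
  have ht : t \ s.erase a = t \ s := by ext; grind
  rw [erase_sdiff_comm, ht, card_erase_of_mem (mem_sdiff.mpr ⟨ha, hat⟩)]
  have := card_pos.mpr ⟨a, mem_sdiff.mpr ⟨ha, hat⟩⟩
  omega

theorem card_sdiff_add_card_sdiff_insert (ha : a ∉ s) (hat : a ∈ t) :
    #(insert a s \ t) + #(t \ insert a s) + 1 = #(s \ t) + #(t \ s) := by
  rw [insert_sdiff_of_mem _ hat, sdiff_insert, card_erase_of_mem (mem_sdiff.mpr ⟨hat, ha⟩)]
  have := card_pos.mpr ⟨a, mem_sdiff.mpr ⟨hat, ha⟩⟩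
  omega

end SdiffCard

section Optimality

variable {n : ℕ} (p : Fin n → ℝ) (D : ℝ)

theorem expLoss_insert {S : Finset (Fin n)} {i : Fin n} (hi : i ∉ S) :
    expLoss p D (insert i S) = expLoss p D S + 2 * p i * (∑ j ∈ S, p j - (D - 1 / 2)) := by
  simp only [expLoss, sum_insert hi]
  ring

variable {p D} {T : Finset (Fin n)}

theorem exists_expLoss_le_of_ne (hp : ∀ i, 0 ≤ p i) (hsep : ∀ x ∉ T, ∀ y ∈ T, p x ≤ p y)
    (hT : D - 1 / 2 ≤ ∑ i ∈ T, p i) (hT_erase : ∀ y ∈ T, ∑ i ∈ T.erase y, p i ≤ D - 1 / 2)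
    {S : Finset (Fin n)} (hS : S ≠ T) :
    ∃ S', #(S' \ T) + #(T \ S') < #(S \ T) + #(T \ S) ∧ expLoss p D S' ≤ expLoss p D S := by
  by_cases hST : S ⊆ T
  · obtain ⟨y, hyT, hyS⟩ := not_subset.mp fun hTS => hS (hST.antisymm hTS)
    have hsum : ∑ i ∈ S, p i ≤ ∑ i ∈ T.erase y, p i :=
      sum_le_sum_of_subset_of_nonneg
        (fun i hi => mem_erase.mpr ⟨ne_of_mem_of_not_mem hi hyS, hST hi⟩) fun i _ _ => hp i
    refine ⟨insert y S, by have := card_sdiff_add_card_sdiff_insert hyS hyT; omega, ?_⟩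
    rw [expLoss_insert p D hyS]
    nlinarith [hp y, hT_erase y hyT]
  obtain ⟨x, hxS, hxT⟩ := not_subset.mp hST
  have hR := card_sdiff_add_card_sdiff_erase hxS hxT
  set R := S.erase x
  have hS_eq : expLoss p D S = expLoss p D R + 2 * p x * (∑ i ∈ R, p i - (D - 1 / 2)) := by
    rw [← expLoss_insert p D (notMem_erase x S), insert_erase hxS]
  by_cases hRsum : D - 1 / 2 ≤ ∑ i ∈ R, p i
  · exact ⟨R, by omega, by nlinarith [hp x]⟩
  -- `R` is below the threshold, so it cannot contain `T`: trade `x` for a missing `y ∈ T`.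
  obtain ⟨y, hyT, hyS⟩ : ∃ y ∈ T, y ∉ S := by
    by_contra! hTS
    have : ∑ i ∈ T, p i ≤ ∑ i ∈ R, p i := sum_le_sum_of_subset_of_nonneg
      (fun i hi => mem_erase.mpr ⟨ne_of_mem_of_not_mem hi hxT, hTS i hi⟩) fun i _ _ => hp i
    linarith
  have hyR : y ∉ R := fun h => hyS (mem_of_mem_erase h)
  refine ⟨insert y R, by have := card_sdiff_add_card_sdiff_insert hyR hyT; omega, ?_⟩
  rw [expLoss_insert p D hyR, hS_eq]
  nlinarith [hsep x hxT y hyT]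

theorem expLoss_le_of_separated (hp : ∀ i, 0 ≤ p i) (hsep : ∀ x ∉ T, ∀ y ∈ T, p x ≤ p y)
    (hT : D - 1 / 2 ≤ ∑ i ∈ T, p i) (hT_erase : ∀ y ∈ T, ∑ i ∈ T.erase y, p i ≤ D - 1 / 2)
    (S : Finset (Fin n)) : expLoss p D T ≤ expLoss p D S := by
  induction hN : #(S \ T) + #(T \ S) using Nat.strong_induction_on generalizing S with
  | _ N ih =>
    by_cases hS : S = T
    · rw [hS]
    obtain ⟨S', hlt, hle⟩ := exists_expLoss_le_of_ne hp hsep hT hT_erase hS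
    exact (ih _ (hN ▸ hlt) S' rfl).trans hle

end Optimality

section Offline

variable {n : ℕ} {f : Fin n → ℝ} {σ τ : Equiv.Perm (Fin n)} {k : ℕ}

theorem prefixSet_eq_of_separated (hk : k ≤ n)
    (hsep : ∀ i j : Fin n, (i : ℕ) < k → k ≤ (j : ℕ) → f (σ j) < f (σ i))
    (hτ : ∀ i j : Fin n, i ≤ j → f (τ j) ≤ f (τ i)) : prefixSet τ k = prefixSet σ k := by
  have hcard : #(prefixSet τ k) = #(prefixSet σ k) := by
    rw [card_prefixSet σ hk, card_prefixSet τ hk]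
  refine eq_of_subset_of_card_le (fun x hxτ => ?_) hcard.ge
  by_contra hxσ
  obtain ⟨y, hyσ, hyτ⟩ :=
    not_subset.mp fun h => hxσ ((eq_of_subset_of_card_le h hcard.le).symm ▸ hxτ)
  have hlt : f x < f y := by
    rw [mem_prefixSet] at hxσ hyσ
    simpa using hsep (σ.symm y) (σ.symm x) hyσ (not_lt.mp hxσ)
  exact (apply_le_apply_of_mem_prefixSet τ hτ hxτ hyτ).not_gt hlt

theorem prefixSet_eq_of_offline_output (hf : ∀ i, 0 ≤ f i) (hk : k ≤ n)
    (hsep : ∀ i j : Fin n, (i : ℕ) < k → k ≤ (j : ℕ) → f (σ j) < f (σ i))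
    (hτ : ∀ i j : Fin n, i ≤ j → f (τ j) ≤ f (τ i)) {c : ℝ}
    (hT : ∑ i ∈ prefixSet σ k, f i > c)
    (hT_erase : ∀ y ∈ prefixSet σ k, ∑ i ∈ (prefixSet σ k).erase y, f i ≤ c)
    {m : ℕ} (hm : m ≤ n)
    (halg : (∑ i ∈ prefixSet τ m, f i > c ∧ ∀ m' < m, ∑ i ∈ prefixSet τ m', f i ≤ c) ∨
      (m = n ∧ ∑ i ∈ prefixSet τ n, f i ≤ c)) :
    prefixSet τ m = prefixSet σ k := by
  have hτk := prefixSet_eq_of_separated hk hsep hτ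
  have hsum_le {s t : Finset (Fin n)} (h : s ⊆ t) : ∑ i ∈ s, f i ≤ ∑ i ∈ t, f i :=
    sum_le_sum_of_subset_of_nonneg h fun i _ _ => hf i
  rcases halg with ⟨hgt, hmin⟩ | ⟨rfl, hle⟩
  · obtain hmk | rfl | hkm := lt_trichotomy m k
    · have hlast : τ ⟨k - 1, by omega⟩ ∈ prefixSet σ k := hτk ▸ mem_prefixSet.mpr (by simp; omega)
      have hsub : prefixSet τ m ⊆ (prefixSet σ k).erase (τ ⟨k - 1, by omega⟩) := by
        rw [← hτk, prefixSet_erase_last τ (by omega) hk]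
        exact prefixSet_mono τ (by omega)
      linarith [hsum_le hsub, hT_erase _ hlast]
    · exact hτk
    · linarith [hτk ▸ hmin k hkm]
  · linarith [hsum_le (hτk ▸ prefixSet_mono τ hk)]

end Offline

section Perturbation

variable {ι : Type*} {s : Finset ι} {f g : ι → ℝ} {ε : ℝ}

theorem sum_sub_card_mul_lt_sum (hs : s.Nonempty) (h : ∀ i ∈ s, |f i - g i| < ε) :
    ∑ i ∈ s, g i - #s * ε < ∑ i ∈ s, f i :=
  calc ∑ i ∈ s, g i - #s * ε = ∑ i ∈ s, (g i - ε) := by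
        rw [sum_sub_distrib, sum_const, nsmul_eq_mul]
    _ < ∑ i ∈ s, f i := sum_lt_sum_of_nonempty hs fun i hi => by linarith [(abs_lt.mp (h i hi)).1]

theorem sum_le_sum_add_card_mul (h : ∀ i ∈ s, |f i - g i| ≤ ε) :
    ∑ i ∈ s, f i ≤ ∑ i ∈ s, g i + #s * ε :=
  calc ∑ i ∈ s, f i ≤ ∑ i ∈ s, (g i + ε) :=
        sum_le_sum fun i hi => by linarith [(abs_le.mp (h i hi)).2]
    _ = ∑ i ∈ s, g i + #s * ε := by rw [sum_add_distrib, sum_const, nsmul_eq_mul]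

theorem threshold_crossing_of_abs_sub_lt [DecidableEq ι] {c : ℝ} (hs : s.Nonempty)
    (hε : 0 < ε) (hclose : ∀ i ∈ s, |f i - g i| < ε) (hs_sum : c + #s * ε ≤ ∑ i ∈ s, g i)
    (hs_erase : ∀ y ∈ s, ∑ i ∈ s.erase y, g i + #s * ε ≤ c) :
    ∑ i ∈ s, f i > c ∧ ∀ y ∈ s, ∑ i ∈ s.erase y, f i < c := by
  refine ⟨by linarith [sum_sub_card_mul_lt_sum hs hclose], fun y hy => ?_⟩
  have := sum_le_sum_add_card_mul
    fun i (hi : i ∈ s.erase y) => (hclose i (mem_of_mem_erase hi)).le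
  rw [card_erase_of_mem hy, Nat.cast_sub (card_pos.mpr hs), Nat.cast_one] at this
  linarith [hs_erase y hy]

theorem apply_lt_apply_of_abs_sub_lt {n : ℕ} {σ : Equiv.Perm (Fin n)} {f g : Fin n → ℝ}
    (hσ : ∀ i j : Fin n, i ≤ j → f (σ j) ≤ f (σ i)) {k : ℕ} (hk : 0 < k)
    (hgap : ∀ h : k < n, 2 * ε ≤ f (σ ⟨k - 1, by omega⟩) - f (σ ⟨k, h⟩))
    (hclose : ∀ i, |g i - f i| < ε) (i j : Fin n) (hi : (i : ℕ) < k) (hj : k ≤ (j : ℕ)) :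
    g (σ j) < g (σ i) := by
  have hkn : k < n := hj.trans_lt j.isLt
  have hj_le := hσ ⟨k, hkn⟩ j (Fin.le_def.mpr hj)
  have hi_ge := hσ i ⟨k - 1, by omega⟩ (Fin.le_def.mpr (by simp; omega))
  linarith [hgap hkn, abs_lt.mp (hclose (σ i)), abs_lt.mp (hclose (σ j))]

end Perturbation

theorem stmt_6 {n : ℕ} (p : Fin n → ℝ)
    (hp : ∀ i, 0 ≤ p i ∧ p i ≤ 1) (D : ℝ)
    (σ : Equiv.Perm (Fin n)) (hσ : ∀ i j : Fin n, i ≤ j → p (σ j) ≤ p (σ i))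
    -- (A1): p_{σ(1)} > ⋯ > p_{σ(n)} > 0
    (hA1 : ∀ i j : Fin n, i < j → p (σ j) < p (σ i))
    -- (A2)
    (k : ℕ) (hk1 : 1 ≤ k) (hk2 : k ≤ n)
    (hkgt : ∑ i ∈ prefixSet σ k, p i > D - 1/2)
    (hklt : ∑ i ∈ prefixSet σ (k - 1), p i < D - 1/2)
    (δ₁ δ₂ Δk ε₀ : ℝ)
    (hδ₁ : δ₁ = ∑ i ∈ prefixSet σ k, p i - (D - 1/2))
    (hδ₂ : δ₂ = (D - 1/2) - ∑ i ∈ prefixSet σ (k - 1), p i)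
    (hΔk : Δk = if h : k < n then p (σ ⟨k - 1, by omega⟩) - p (σ ⟨k, h⟩) else 2)
    (hε₀ : ε₀ = min (δ₁ / k) (min (δ₂ / k) (Δk / 2))) :
    0 < ε₀ ∧
    ∀ pt : Fin n → ℝ, (∀ i, 0 ≤ pt i ∧ pt i ≤ 1) → (∀ i, |pt i - p i| < ε₀) →
      -- (i): p̃_{σ(i)} > p̃_{σ(j)} whenever 1 ≤ i ≤ k < j ≤ n
      ((∀ i j : Fin n, (i : ℕ) < k → k ≤ (j : ℕ) → pt (σ j) < pt (σ i)) ∧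
      -- (ii)
      (∑ i ∈ prefixSet σ k, pt i > D - 1/2 ∧
        ∑ i ∈ prefixSet σ (k - 1), pt i < D - 1/2) ∧
      -- {σ(1),…,σ(k)} is the output of the offline algorithm applied to (p̃, D)
      (∀ τ : Equiv.Perm (Fin n), (∀ i j : Fin n, i ≤ j → pt (τ j) ≤ pt (τ i)) →
        ∀ m ≤ n,
          ((∑ i ∈ prefixSet τ m, pt i > D - 1/2 ∧
              ∀ m' < m, ∑ i ∈ prefixSet τ m', pt i ≤ D - 1/2) ∨
            (m = n ∧ ∑ i ∈ prefixSet τ n, pt i ≤ D - 1/2)) →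
          prefixSet τ m = prefixSet σ k) ∧
      -- and it is optimal for the true profile p
      (∀ S : Finset (Fin n), expLoss p D (prefixSet σ k) ≤ expLoss p D S)) := by
  set T := prefixSet σ k
  have hkR : (0 : ℝ) < k := by exact_mod_cast hk1
  have hcardT : #T = k := card_prefixSet σ hk2
  have hT_erase : ∀ y ∈ T, ∑ i ∈ T.erase y, p i ≤ ∑ i ∈ prefixSet σ (k - 1), p i :=
    fun y hy => sum_erase_prefixSet_le σ hσ hk1 hk2 hy
  have hε₁ : k * ε₀ ≤ δ₁ := (le_div_iff₀' hkR).mp (hε₀ ▸ min_le_left _ _)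
  have hε₂ : k * ε₀ ≤ δ₂ :=
    (le_div_iff₀' hkR).mp (hε₀ ▸ (min_le_right _ _).trans (min_le_left _ _))
  have hε₃ : ε₀ ≤ Δk / 2 := hε₀ ▸ (min_le_right _ _).trans (min_le_right _ _)
  have hΔpos : 0 < Δk := by
    rw [hΔk]
    split_ifs with h
    · exact sub_pos.mpr (hA1 _ _ (Fin.lt_def.mpr (by simp; omega)))
    · norm_num
  have hε_pos : 0 < ε₀ :=
    hε₀ ▸ lt_min (div_pos (by linarith) hkR) (lt_min (div_pos (by linarith) hkR) (half_pos hΔpos))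
  refine ⟨hε_pos, fun pt hpt hclose => ?_⟩
  have hsep := apply_lt_apply_of_abs_sub_lt hσ hk1
    (fun h => by rw [dif_pos h] at hΔk; linarith) hclose
  obtain ⟨hT_pt, hT_erase_pt⟩ := threshold_crossing_of_abs_sub_lt (c := D - 1 / 2)
    (card_pos.mp (by rw [hcardT]; omega)) hε_pos (fun i _ => hclose i) (by rw [hcardT]; linarith)
    (fun y hy => by rw [hcardT]; linarith [hT_erase y hy])
  refine ⟨hsep, ⟨hT_pt, ?_⟩, fun τ hτ m hm halg => ?_, ?_⟩
  · rw [← prefixSet_erase_last σ hk1 hk2]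
    exact hT_erase_pt _ (mem_prefixSet.mpr (by simp; omega))
  · exact prefixSet_eq_of_offline_output (fun i => (hpt i).1) hk2 hsep hτ hT_pt
      (fun y hy => (hT_erase_pt y hy).le) hm halg
  · exact expLoss_le_of_separated (fun i => (hp i).1)
      (fun x hx y hy => apply_le_apply_of_mem_prefixSet σ hσ hy hx) hkgt.le
      (fun y hy => (hT_erase y hy).trans hklt.le)
end

section
/- Let n ≥ 1, let p : {1,…,n} → [0,1] be a probability profile with a sorting permutation σ, let D ∈ ℝ, let 1 ≤ l ≤ n, and let ε ≥ 0. Then: (a) if ∑_{i=1}^{l−1} p_{σ(i)} ≥ D − 1/2 − (l−1)ε, then f_{p,D}({σ(1),…,σ(l−1)}) − f_{p,D}({σ(1),…,σ(l)}) ≤ 2(l−1)ε ≤ 2nε; and (b) if l ≤ n − 1 and ∑_{i=1}^{l} p_{σ(i)} ≤ D − 1/2 + lε, then f_{p,D}({σ(1),…,σ(l+1)}) − f_{p,D}({σ(1),…,σ(l)}) ≤ 2lε ≤ 2nε. In other words, selecting one arm fewer or one arm more than the sorted prefix of length l incurs excess expected loss at most 2nε under the respective near-target condition. -/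
open Finset

/-! Adding an arm `a` to `S` changes the loss by `p a · (2 (∑_S p − D) + 1)`. If
`∑_S p ≥ D − 1/2 − t`, this is at least `−2 t · p a ≥ −2t`, so `S` is worse than `insert a S` by at
most `2t`; if `∑_S p ≤ D − 1/2 + t`, it is at most `2 t · p a ≤ 2t`. For the prefixes of length `l`,
the slack `t` is `(l − 1) ε` resp. `l ε`. -/

section Prefix

variable {n : ℕ} (σ : Equiv.Perm (Fin n))

theorem prefixSet_succ {k : ℕ} (hk : k < n) :
    prefixSet σ (k + 1) = insert (σ ⟨k, hk⟩) (prefixSet σ k) := by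
  rw [prefixSet, prefixSet, ← image_insert]
  congr 1
  ext i
  simp [Fin.ext_iff, le_iff_lt_or_eq, or_comm]

theorem apply_notMem_prefixSet {k : ℕ} (hk : k < n) : σ ⟨k, hk⟩ ∉ prefixSet σ k := by
  simp [prefixSet]

end Prefix

section Loss

variable {n : ℕ} (p : Fin n → ℝ) (D : ℝ) {S : Finset (Fin n)} {a : Fin n}

theorem expLoss_insert_sub (ha : a ∉ S) :
    expLoss p D (insert a S) - expLoss p D S = p a * (2 * (∑ i ∈ S, p i - D) + 1) := by
  simp only [expLoss, sum_insert ha]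
  ring

variable {p} {t : ℝ}

theorem expLoss_sub_expLoss_insert_le (ha : a ∉ S) (hpa : 0 ≤ p a ∧ p a ≤ 1) (ht : 0 ≤ t)
    (hS : D - 1 / 2 - t ≤ ∑ i ∈ S, p i) :
    expLoss p D S - expLoss p D (insert a S) ≤ 2 * t := by
  have hgap : 0 ≤ p a * (∑ i ∈ S, p i - (D - 1 / 2 - t)) := mul_nonneg hpa.1 (by linarith)
  have hslack : 0 ≤ (1 - p a) * t := mul_nonneg (by linarith [hpa.2]) ht
  linear_combination (-1 : ℝ) * expLoss_insert_sub p D ha + 2 * hgap + 2 * hslack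

theorem expLoss_insert_sub_le (ha : a ∉ S) (hpa : 0 ≤ p a ∧ p a ≤ 1) (ht : 0 ≤ t)
    (hS : ∑ i ∈ S, p i ≤ D - 1 / 2 + t) :
    expLoss p D (insert a S) - expLoss p D S ≤ 2 * t := by
  have hgap : 0 ≤ p a * (D - 1 / 2 + t - ∑ i ∈ S, p i) := mul_nonneg hpa.1 (by linarith)
  have hslack : 0 ≤ (1 - p a) * t := mul_nonneg (by linarith [hpa.2]) ht
  linear_combination expLoss_insert_sub p D ha + 2 * hgap + 2 * hslack

end Loss

theorem stmt_14_general {n : ℕ} (p : Fin n → ℝ)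
    (hp : ∀ i, 0 ≤ p i ∧ p i ≤ 1) (D : ℝ)
    (σ : Equiv.Perm (Fin n))
    (l : ℕ) (hl1 : 1 ≤ l) (hl2 : l ≤ n) (ε : ℝ) (hε : 0 ≤ ε) :
    -- (a)
    ((∑ i ∈ prefixSet σ (l - 1), p i ≥ D - 1/2 - ((l : ℝ) - 1) * ε →
      expLoss p D (prefixSet σ (l - 1)) - expLoss p D (prefixSet σ l)
        ≤ 2 * ((l : ℝ) - 1) * ε ∧
      2 * ((l : ℝ) - 1) * ε ≤ 2 * (n : ℝ) * ε) ∧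
    -- (b)
    (∀ _hl3 : l ≤ n - 1,
      ∑ i ∈ prefixSet σ l, p i ≤ D - 1/2 + (l : ℝ) * ε →
      expLoss p D (prefixSet σ (l + 1)) - expLoss p D (prefixSet σ l)
        ≤ 2 * (l : ℝ) * ε ∧
      2 * (l : ℝ) * ε ≤ 2 * (n : ℝ) * ε)) := by
  have hln : (l : ℝ) ≤ n := by exact_mod_cast hl2
  refine ⟨fun hsum => ⟨?_, by nlinarith⟩, fun hl3 hsum => ⟨?_, by nlinarith⟩⟩
  · obtain ⟨m, rfl⟩ : ∃ m, l = m + 1 := ⟨l - 1, by omega⟩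
    have hm : m < n := by omega
    have ht : 0 ≤ (m : ℝ) * ε := by positivity
    simp only [Nat.add_sub_cancel, Nat.cast_add, Nat.cast_one, add_sub_cancel_right] at hsum ⊢
    rw [prefixSet_succ σ hm, mul_assoc]
    exact expLoss_sub_expLoss_insert_le D (apply_notMem_prefixSet σ hm) (hp _) ht hsum
  · have hl : l < n := by omega
    have ht : 0 ≤ (l : ℝ) * ε := by positivity
    rw [prefixSet_succ σ hl, mul_assoc]
    exact expLoss_insert_sub_le D (apply_notMem_prefixSet σ hl) (hp _) ht hsum

theorem stmt_14 {n : ℕ} (hn : 1 ≤ n) (p : Fin n → ℝ)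
    (hp : ∀ i, 0 ≤ p i ∧ p i ≤ 1) (D : ℝ)
    (σ : Equiv.Perm (Fin n)) (hσ : ∀ i j : Fin n, i ≤ j → p (σ j) ≤ p (σ i))
    (l : ℕ) (hl1 : 1 ≤ l) (hl2 : l ≤ n) (ε : ℝ) (hε : 0 ≤ ε) :
    -- (a)
    ((∑ i ∈ prefixSet σ (l - 1), p i ≥ D - 1/2 - ((l : ℝ) - 1) * ε →
      expLoss p D (prefixSet σ (l - 1)) - expLoss p D (prefixSet σ l)
        ≤ 2 * ((l : ℝ) - 1) * ε ∧
      2 * ((l : ℝ) - 1) * ε ≤ 2 * (n : ℝ) * ε) ∧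
    -- (b)
    (∀ _hl3 : l ≤ n - 1,
      ∑ i ∈ prefixSet σ l, p i ≤ D - 1/2 + (l : ℝ) * ε →
      expLoss p D (prefixSet σ (l + 1)) - expLoss p D (prefixSet σ l)
        ≤ 2 * (l : ℝ) * ε ∧
      2 * (l : ℝ) * ε ≤ 2 * (n : ℝ) * ε)) :=
  stmt_14_general p hp D σ l hl1 hl2 ε hε
end
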